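/- Let G = (S₁, S₂, E, w) be a game, s₀ an initial state, U ∈ ℕ, and t ∈ ℚ. Define the expanded game G' whose states are (S × {0, 1, …, U}) ∪ {sink}, where a state (s, c) belongs to the player owning s and sink belongs to player 1; for each edge (u, v) ∈ E and each c ∈ {0, …, U}: if d = c + w(u, v) ∈ [0, U] then G' has an edge from (u, c) to (v, d) of weight w(u, v), and otherwise G' has an edge from (u, c) to sink of weight 1; moreover G' has a self-loop on sink of weight 1. Then player 1 has a winning strategy from s₀ for LU(U, 0) ∩ AvgEnergyLevel(t) in G if and only if player 1 has a winning strategy from (s₀, 0) for AvgEnergyLevel(t) in G'. -/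

import Mathlib

open Filter

noncomputable section

/-- A two-player turn-based game on a (finite) state space `S`: `p1 s` holds iff state `s`
belongs to player 1 (otherwise it belongs to player 2), `E` is the edge relation (every state
has a successor), and `w` assigns an integer weight to every edge. -/
structure Game (S : Type) where
  p1 : S → Prop
  E : S → S → Prop
  w : S → S → ℤ
  succ : ∀ s, ∃ t, E s t

variable {S : Type}

/-- `π` is a play of `G` starting from `s₀`. -/
def IsPlay (G : Game S) (s₀ : S) (π : ℕ → S) : Prop :=
  π 0 = s₀ ∧ ∀ n, G.E (π n) (π (n + 1))

/-- Energy level of the play `π` at position `n`. -/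
def ELp (G : Game S) (π : ℕ → S) (n : ℕ) : ℤ :=
  ∑ i ∈ Finset.range n, G.w (π i) (π (i + 1))

/-- Average-energy of a play (limsup variant), in the extended reals. -/
def AEsupP (G : Game S) (π : ℕ → S) : EReal :=
  limsup (fun n : ℕ => (((∑ i ∈ Finset.range n, (ELp G π (i + 1) : ℝ)) / n : ℝ) : EReal)) atTop

/-- Average-energy of a play (liminf variant). -/
def AEinfP (G : Game S) (π : ℕ → S) : EReal :=
  liminf (fun n : ℕ => (((∑ i ∈ Finset.range n, (ELp G π (i + 1) : ℝ)) / n : ℝ) : EReal)) atTop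

/-- Mean-payoff of a play (limsup variant). -/
def MPsupP (G : Game S) (π : ℕ → S) : EReal :=
  limsup (fun n : ℕ => (((ELp G π n : ℝ) / n : ℝ) : EReal)) atTop

/-- Total-payoff of a play (limsup variant). -/
def TPsupP (G : Game S) (π : ℕ → S) : EReal :=
  limsup (fun n : ℕ => ((ELp G π n : ℝ) : EReal)) atTop

/-- The history (finite prefix) `π 0, …, π n` of a play, as a list. -/
def hist (π : ℕ → S) (n : ℕ) : List S := List.ofFn (fun i : Fin (n + 1) => π i)

/-- A (deterministic) strategy for player 1: on every nonempty finite path of `G` ending in a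
player-1 state, it prescribes an `E`-successor of the last state. -/
def IsStrat1 (G : Game S) (σ : List S → S) : Prop :=
  ∀ (ρ : List S) (h : ρ ≠ []), List.Chain' G.E ρ → G.p1 (ρ.getLast h) →
    G.E (ρ.getLast h) (σ ρ)

/-- A strategy for player 2 (who owns the states where `p1` fails). -/
def IsStrat2 (G : Game S) (σ : List S → S) : Prop :=
  ∀ (ρ : List S) (h : ρ ≠ []), List.Chain' G.E ρ → ¬ G.p1 (ρ.getLast h) →
    G.E (ρ.getLast h) (σ ρ)

/-- A strategy is memoryless if its choice only depends on the last state of the history. -/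
def Memoryless (σ : List S → S) : Prop :=
  ∀ (ρ ρ' : List S) (h : ρ ≠ []) (h' : ρ' ≠ []),
    ρ.getLast h = ρ'.getLast h' → σ ρ = σ ρ'

/-- The play `π` is consistent with the player-1 strategy `σ`. -/
def Consistent1 (G : Game S) (σ : List S → S) (π : ℕ → S) : Prop :=
  ∀ n, G.p1 (π n) → π (n + 1) = σ (hist π n)

/-- The play `π` is consistent with the player-2 strategy `σ`. -/
def Consistent2 (G : Game S) (σ : List S → S) (π : ℕ → S) : Prop :=
  ∀ n, ¬ G.p1 (π n) → π (n + 1) = σ (hist π n)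

/-- `σ` is a winning strategy for player 1 from `s₀` for the objective `Obj`:
every consistent play from `s₀` belongs to `Obj`. -/
def Winning1 (G : Game S) (s₀ : S) (σ : List S → S) (Obj : (ℕ → S) → Prop) : Prop :=
  IsStrat1 G σ ∧ ∀ π, IsPlay G s₀ π → Consistent1 G σ π → Obj π

/-- `σ` is a winning strategy for player 2 from `s₀` against the objective `Obj`:
every consistent play from `s₀` lies outside `Obj`. -/
def Winning2 (G : Game S) (s₀ : S) (σ : List S → S) (Obj : (ℕ → S) → Prop) : Prop :=
  IsStrat2 G σ ∧ ∀ π, IsPlay G s₀ π → Consistent2 G σ π → ¬ Obj π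

/-- Average-energy objective: the average-energy of the play is at most `t`. -/
def AvgEnergyLevel (G : Game S) (t : ℚ) : (ℕ → S) → Prop :=
  fun π => AEsupP G π ≤ ((t : ℝ) : EReal)

/-- Mean-payoff objective: the mean-payoff of the play is at most `t`. -/
def MeanPayOff (G : Game S) (t : ℚ) : (ℕ → S) → Prop :=
  fun π => MPsupP G π ≤ ((t : ℝ) : EReal)

/-- Total-payoff objective: the total-payoff of the play is at most `t`. -/
def TotalPayOff (G : Game S) (t : ℤ) : (ℕ → S) → Prop :=
  fun π => TPsupP G π ≤ ((t : ℝ) : EReal)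

/-- Lower-bounded energy objective with initial credit `c₀`. -/
def LowerObj (G : Game S) (c₀ : ℕ) : (ℕ → S) → Prop :=
  fun π => ∀ n, 0 ≤ (c₀ : ℤ) + ELp G π n

/-- Lower- and upper-bounded energy objective with upper bound `U` and initial credit `c₀`. -/
def LUObj (G : Game S) (U c₀ : ℕ) : (ℕ → S) → Prop :=
  fun π => ∀ n, 0 ≤ (c₀ : ℤ) + ELp G π n ∧ (c₀ : ℤ) + ELp G π n ≤ (U : ℤ)

/-- Edge relation of the expanded game: states are pairs (state, energy in `[0, U]`) plus a
`sink` state.  An edge of `G` is kept (updating the energy) when the new energy stays in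
`[0, U]`, and is redirected to `sink` otherwise; `sink` has a self-loop. -/
def expE (G : Game S) (U : ℕ) :
    ((S × Fin (U + 1)) ⊕ Unit) → ((S × Fin (U + 1)) ⊕ Unit) → Prop
  | Sum.inl (u, c), Sum.inl (v, d) => G.E u v ∧ (d : ℤ) = (c : ℤ) + G.w u v
  | Sum.inl (u, c), Sum.inr _ =>
      ∃ v, G.E u v ∧ ((c : ℤ) + G.w u v < 0 ∨ (U : ℤ) < (c : ℤ) + G.w u v)
  | Sum.inr _, Sum.inr _ => True
  | Sum.inr _, Sum.inl _ => False

/-- In the expanded game, a state `(s, c)` belongs to the player owning `s`,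
and `sink` belongs to player 1. -/
def expP1 (G : Game S) (U : ℕ) : ((S × Fin (U + 1)) ⊕ Unit) → Prop
  | Sum.inl (s, _) => G.p1 s
  | Sum.inr _ => True

theorem expSucc (G : Game S) (U : ℕ) : ∀ x, ∃ y, expE G U x y := by
  rintro (⟨u, c⟩ | _)
  · obtain ⟨v, hv⟩ := G.succ u
    by_cases h : 0 ≤ (c : ℤ) + G.w u v ∧ (c : ℤ) + G.w u v ≤ (U : ℤ)
    · refine ⟨Sum.inl (v, ⟨((c : ℤ) + G.w u v).toNat, ?_⟩), hv, ?_⟩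
      · omega
      · simp only [Int.toNat_of_nonneg h.1]
    · exact ⟨Sum.inr (), v, hv, by omega⟩
  · exact ⟨Sum.inr (), trivial⟩

/-- Weights of the expanded game of Lemma `aelu_to_ae`: kept edges keep their weight, and all
edges into `sink` (as well as its self-loop) have weight `1`. -/
def expW (G : Game S) (U : ℕ) :
    ((S × Fin (U + 1)) ⊕ Unit) → ((S × Fin (U + 1)) ⊕ Unit) → ℤ
  | Sum.inl (u, _), Sum.inl (v, _) => G.w u v
  | _, _ => 1

/-- The expanded game encoding the energy constraint `0 ≤ energy ≤ U` in the state space. -/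
def expGame (G : Game S) (U : ℕ) : Game ((S × Fin (U + 1)) ⊕ Unit) where
  p1 := expP1 G U
  E := expE G U
  w := expW G U
  succ := expSucc G U

/-! A play of `G` lifts to the expanded game by recording its energy; the lift has the same energy
levels as long as the energy stays in `[0, U]`, and falls into `sink` as soon as it leaves that
interval. Once in `sink` every step has weight `1`, so the average energy is `+∞`: a winning
strategy of the expanded game never lets a play reach `sink`. Strategies therefore transfer both
ways. A strategy `σ` of `G` is played on the projected history, and every play consistent with the
resulting strategy is, move by move, the lift of a `σ`-consistent play of `G` (a move into `sink`
being realized by a move of `G` that leaves `[0, U]`, which `σ` never allows). Conversely a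
strategy of the expanded game is played on the lifted history, answering with a move of `G`
whose lifted step is the prescribed one. -/

lemma List.getLastD_eq_getLast {α : Type} {l : List α} (d : α) (h : l ≠ []) :
    l.getLastD d = l.getLast h := by
  rw [List.getLastD_eq_getLast?, List.getLast?_eq_some_getLast h, Option.getD_some]

section Histories

variable {G : Game S}

lemma hist_length (π : ℕ → S) (n : ℕ) : (hist π n).length = n + 1 := List.length_ofFn

lemma hist_ne_nil (π : ℕ → S) (n : ℕ) : hist π n ≠ [] :=
  List.ne_nil_of_length_pos (by simp [hist_length])

lemma hist_getLast (π : ℕ → S) (n : ℕ) (h : hist π n ≠ []) : (hist π n).getLast h = π n := by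
  simp only [hist, List.getLast_ofFn, Nat.add_sub_cancel]

lemma hist_getLastD (π : ℕ → S) (n : ℕ) (d : S) : (hist π n).getLastD d = π n := by
  rw [List.getLastD_eq_getLast d (hist_ne_nil π n), hist_getLast]

lemma hist_congr {π π' : ℕ → S} {n : ℕ} (h : ∀ k ≤ n, π k = π' k) : hist π n = hist π' n :=
  List.ofFn_inj.2 <| funext fun i => h i (Nat.le_of_lt_succ i.isLt)

lemma map_hist {T : Type} (f : S → T) (π : ℕ → S) (n : ℕ) :
    (hist π n).map f = hist (f ∘ π) n := by
  simp only [hist, List.map_ofFn]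
  rfl

lemma isChain_hist {π : ℕ → S} {n : ℕ} (h : ∀ k < n, G.E (π k) (π (k + 1))) :
    List.IsChain G.E (hist π n) := by
  refine List.isChain_iff_getElem.2 fun i hi => ?_
  simp only [hist, List.getElem_ofFn]
  exact h i (by simp [hist_length] at hi; omega)

lemma IsStrat1.edge_hist {σ : List S → S} (hσ : IsStrat1 G σ) {π : ℕ → S} {n : ℕ}
    (h : ∀ k < n, G.E (π k) (π (k + 1))) (hp : G.p1 (π n)) : G.E (π n) (σ (hist π n)) := by
  simpa only [hist_getLast] using
    hσ _ (hist_ne_nil π n) (isChain_hist h) (by rwa [hist_getLast])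

def playOf (s₀ : S) (next : List S → S) : ℕ → S
  | 0 => s₀
  | n + 1 => next (List.ofFn fun i : Fin (n + 1) => playOf s₀ next i)

lemma playOf_zero (s₀ : S) (next : List S → S) : playOf s₀ next 0 = s₀ := by
  rw [playOf]

lemma playOf_succ (s₀ : S) (next : List S → S) (n : ℕ) :
    playOf s₀ next (n + 1) = next (hist (playOf s₀ next) n) := by
  rw [playOf]
  rfl

end Histories

section AverageEnergy

open Finset

lemma tendsto_average_atTop {e : ℕ → ℝ} {K : ℝ} (h : ∀ m : ℕ, m + K ≤ e m) :
    Tendsto (fun n : ℕ => (∑ i ∈ range n, e (i + 1)) / n) atTop atTop := by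
  have gauss : ∀ n : ℕ, ∑ i ∈ range n, ((i : ℝ) + 1) = n * (n + 1) / 2 := fun n => by
    induction n with
    | zero => simp
    | succ n ih => rw [sum_range_succ, ih]; push_cast; ring
  have hlin : Tendsto (fun n : ℕ => ((n : ℝ) + 1) / 2 + K) atTop atTop :=
    tendsto_atTop_add_const_right _ _ <| Tendsto.atTop_div_const two_pos <|
      tendsto_atTop_add_const_right _ 1 tendsto_natCast_atTop_atTop
  refine tendsto_atTop_mono' _ ((eventually_gt_atTop 0).mono fun n hn => ?_) hlin
  rw [le_div_iff₀ (by exact_mod_cast hn)]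
  calc (((n : ℝ) + 1) / 2 + K) * n = ∑ i ∈ range n, (((i : ℝ) + 1) + K) := by
        rw [sum_add_distrib, gauss, sum_const, card_range, nsmul_eq_mul]; ring
    _ ≤ ∑ i ∈ range n, e (i + 1) := sum_le_sum fun i _ => by exact_mod_cast h (i + 1)

lemma AEsupP_congr {S₁ S₂ : Type} {G₁ : Game S₁} {G₂ : Game S₂} {π₁ : ℕ → S₁} {π₂ : ℕ → S₂}
    (h : ∀ n, ELp G₁ π₁ n = ELp G₂ π₂ n) : AEsupP G₁ π₁ = AEsupP G₂ π₂ := by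
  simp only [AEsupP, h]

variable {G : Game S}

lemma ELp_succ (π : ℕ → S) (n : ℕ) : ELp G π (n + 1) = ELp G π n + G.w (π n) (π (n + 1)) :=
  sum_range_succ _ n

lemma exists_add_le_ELp {π : ℕ → S} {N : ℕ} (h : ∀ m ≥ N, G.w (π m) (π (m + 1)) = 1) :
    ∃ K : ℤ, ∀ m : ℕ, m + K ≤ ELp G π m := by
  set f : ℕ → ℤ := fun m => ELp G π m - m
  have hconst : ∀ m ≥ N, f m = f N := fun m hm => by
    induction m, hm using Nat.le_induction with
    | base => rfl
    | succ m hm ih => simp only [f, ELp_succ, h m hm] at ih ⊢; push_cast; omega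
  obtain ⟨k, -, hk⟩ := (range (N + 1)).exists_min_image f ⟨0, by simp⟩
  refine ⟨f k, fun m => ?_⟩
  have : f k ≤ f m := by
    rcases le_or_gt m N with hm | hm
    · exact hk m (by simp; omega)
    · rw [hconst m hm.le]; exact hk N (by simp)
  simp only [f] at this ⊢
  omega

lemma AEsupP_eq_top_of_weight_eq_one {π : ℕ → S} {N : ℕ}
    (h : ∀ m ≥ N, G.w (π m) (π (m + 1)) = 1) : AEsupP G π = ⊤ := by
  obtain ⟨K, hK⟩ := exists_add_le_ELp h
  have := tendsto_average_atTop (e := fun m => (ELp G π m : ℝ)) (K := K) fun m => by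
    exact_mod_cast hK m
  exact (EReal.tendsto_coe_atTop.comp this).limsup_eq

end AverageEnergy

section Expansion

variable {G : Game S} {U : ℕ}

def expStep (G : Game S) (U : ℕ) : (S × Fin (U + 1)) ⊕ Unit → S → (S × Fin (U + 1)) ⊕ Unit
  | Sum.inl (u, c), v =>
      if h : 0 ≤ (c : ℤ) + G.w u v ∧ (c : ℤ) + G.w u v ≤ U then
        Sum.inl (v, ⟨((c : ℤ) + G.w u v).toNat, by omega⟩)
      else Sum.inr ()
  | Sum.inr _, _ => Sum.inr ()

@[simp]
lemma expStep_inr (v : S) : expStep G U (Sum.inr ()) v = Sum.inr () := rfl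

lemma expStep_eq_inl_iff {u v v' : S} {c d : Fin (U + 1)} :
    expStep G U (Sum.inl (u, c)) v = Sum.inl (v', d) ↔ v' = v ∧ (d : ℤ) = c + G.w u v := by
  have := d.isLt
  dsimp only [expStep]
  split_ifs with h
  · simp only [Sum.inl.injEq, Prod.mk.injEq, Fin.ext_iff]
    constructor <;> rintro ⟨rfl, _⟩ <;> exact ⟨rfl, by omega⟩
  · simp only [false_iff, not_and]
    omega

lemma expStep_eq_inr_iff {u v : S} {c : Fin (U + 1)} :
    expStep G U (Sum.inl (u, c)) v = Sum.inr () ↔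
      (c : ℤ) + G.w u v < 0 ∨ (U : ℤ) < c + G.w u v := by
  dsimp only [expStep]
  split_ifs with h
  · simp only [false_iff]
    omega
  · simp only [true_iff]
    omega

lemma eq_inr_of_expE_inr {y : (S × Fin (U + 1)) ⊕ Unit} (h : (expGame G U).E (Sum.inr ()) y) :
    y = Sum.inr () := by
  rcases y with _ | ⟨⟩
  · exact h.elim
  · rfl

lemma expE_expStep {x : (S × Fin (U + 1)) ⊕ Unit} {u v : S}
    (hx : ∀ s c, x = Sum.inl (s, c) → s = u) (huv : G.E u v) :
    (expGame G U).E x (expStep G U x v) := by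
  rcases x with ⟨s, c⟩ | ⟨⟩
  · obtain rfl := hx s c rfl
    rcases h : expStep G U (Sum.inl (s, c)) v with ⟨v', d⟩ | ⟨⟩
    · obtain ⟨rfl, hd⟩ := expStep_eq_inl_iff.1 h
      exact ⟨huv, hd⟩
    · exact ⟨v, huv, expStep_eq_inr_iff.1 h⟩
  · trivial

lemma exists_expStep_eq {x y : (S × Fin (U + 1)) ⊕ Unit} {u : S}
    (hx : ∀ s c, x = Sum.inl (s, c) → s = u) (hxy : (expGame G U).E x y) :
    ∃ v, G.E u v ∧ expStep G U x v = y := by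
  rcases x with ⟨s, c⟩ | ⟨⟩
  · obtain rfl := hx s c rfl
    rcases y with ⟨v, d⟩ | ⟨⟩
    · exact ⟨v, hxy.1, expStep_eq_inl_iff.2 ⟨rfl, hxy.2⟩⟩
    · obtain ⟨v, huv, hout⟩ := hxy
      exact ⟨v, huv, expStep_eq_inr_iff.2 hout⟩
  · obtain ⟨v, huv⟩ := G.succ u
    exact ⟨v, huv, (eq_inr_of_expE_inr hxy).symm⟩

lemma expP1_iff {x : (S × Fin (U + 1)) ⊕ Unit} {u : S}
    (hx : ∀ s c, x = Sum.inl (s, c) → s = u) :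
    (expGame G U).p1 x ↔ G.p1 u ∨ x = Sum.inr () := by
  rcases x with ⟨s, c⟩ | ⟨⟨⟩⟩
  · obtain rfl := hx s c rfl
    simp [expGame, expP1]
  · simp [expGame, expP1]

lemma AEsupP_eq_top_of_inr {x : (S × Fin (U + 1)) ⊕ Unit} {π' : ℕ → (S × Fin (U + 1)) ⊕ Unit}
    (hπ' : IsPlay (expGame G U) x π') {N : ℕ} (hN : π' N = Sum.inr ()) :
    AEsupP (expGame G U) π' = ⊤ := by
  have hsink : ∀ m ≥ N, π' m = Sum.inr () := fun m hm => by
    induction m, hm using Nat.le_induction with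
    | base => exact hN
    | succ m _ ih => exact eq_inr_of_expE_inr (ih ▸ hπ'.2 m)
  exact AEsupP_eq_top_of_weight_eq_one (N := N) fun m hm => by simp [expGame, expW, hsink m hm]

end Expansion

section Lift

variable {G : Game S} {U : ℕ}

def liftPlay (G : Game S) (U : ℕ) (π : ℕ → S) : ℕ → (S × Fin (U + 1)) ⊕ Unit
  | 0 => Sum.inl (π 0, ⟨0, Nat.succ_pos U⟩)
  | n + 1 => expStep G U (liftPlay G U π n) (π (n + 1))

lemma liftPlay_eq_inl {π : ℕ → S} {n : ℕ} {s : S} {c : Fin (U + 1)}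
    (h : liftPlay G U π n = Sum.inl (s, c)) : s = π n ∧ (c : ℤ) = ELp G π n := by
  induction n generalizing s c with
  | zero =>
    simp only [liftPlay, Sum.inl.injEq, Prod.mk.injEq] at h
    obtain ⟨rfl, rfl⟩ := h
    simp [ELp]
  | succ n ih =>
    rw [liftPlay] at h
    rcases hn : liftPlay G U π n with ⟨u, c'⟩ | ⟨⟨⟩⟩
    · rw [hn, expStep_eq_inl_iff] at h
      obtain ⟨rfl, hc'⟩ := ih hn
      exact ⟨h.1, by rw [ELp_succ, ← hc', h.2]⟩
    · simp [hn] at h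

lemma liftPlay_lies_over (π : ℕ → S) (n : ℕ) :
    ∀ s c, liftPlay G U π n = Sum.inl (s, c) → s = π n :=
  fun _ _ h => (liftPlay_eq_inl h).1

lemma liftPlay_isPlay {s₀ : S} {π : ℕ → S} (hπ : IsPlay G s₀ π) :
    IsPlay (expGame G U) (Sum.inl (s₀, ⟨0, Nat.succ_pos U⟩)) (liftPlay G U π) :=
  ⟨by rw [liftPlay, hπ.1], fun n => expE_expStep (liftPlay_lies_over π n) (hπ.2 n)⟩

lemma liftPlay_ne_inr_iff {π : ℕ → S} :
    (∀ n, liftPlay G U π n ≠ Sum.inr ()) ↔ LUObj G U 0 π := by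
  constructor
  · intro h n
    rcases hn : liftPlay G U π n with ⟨s, c⟩ | ⟨⟨⟩⟩
    · have := (liftPlay_eq_inl hn).2
      have := c.isLt
      omega
    · exact absurd hn (h n)
  · intro h n
    induction n with
    | zero => simp [liftPlay]
    | succ n ih =>
      rcases hn : liftPlay G U π n with ⟨s, c⟩ | ⟨⟨⟩⟩
      · obtain ⟨rfl, hc⟩ := liftPlay_eq_inl hn
        have := h (n + 1)
        rw [liftPlay, hn, Ne, expStep_eq_inr_iff, hc, ← ELp_succ]
        omega
      · exact absurd hn ih

lemma AEsupP_liftPlay {π : ℕ → S} (h : ∀ n, liftPlay G U π n ≠ Sum.inr ()) :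
    AEsupP (expGame G U) (liftPlay G U π) = AEsupP G π := by
  have hinl : ∀ n, ∃ c, liftPlay G U π n = Sum.inl (π n, c) := fun n => by
    rcases hn : liftPlay G U π n with ⟨s, c⟩ | ⟨⟨⟩⟩
    · exact ⟨c, by rw [(liftPlay_eq_inl hn).1]⟩
    · exact absurd hn (h n)
  refine AEsupP_congr fun n => Finset.sum_congr rfl fun i _ => ?_
  obtain ⟨c, hc⟩ := hinl i
  obtain ⟨d, hd⟩ := hinl (i + 1)
  simp [expGame, expW, hc, hd]

lemma liftPlay_eq_inr_of_le {π : ℕ → S} {k n : ℕ} (h : liftPlay G U π k = Sum.inr ())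
    (hkn : k ≤ n) : liftPlay G U π n = Sum.inr () := by
  induction n, hkn using Nat.le_induction with
  | base => exact h
  | succ n _ ih => rw [liftPlay, ih, expStep_inr]

lemma liftPlay_eq_of_expStep {π : ℕ → S} {π' : ℕ → (S × Fin (U + 1)) ⊕ Unit} {n : ℕ}
    (h₀ : π' 0 = Sum.inl (π 0, ⟨0, Nat.succ_pos U⟩))
    (h : ∀ k < n, expStep G U (π' k) (π (k + 1)) = π' (k + 1)) :
    ∀ k ≤ n, liftPlay G U π k = π' k := by
  intro k hk
  induction k with
  | zero => exact h₀.symm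
  | succ k ih => rw [liftPlay, ih (by omega), h k hk]

end Lift

section Forward

variable {G : Game S} {U : ℕ}

open Classical in
def legalMove (G : Game S) (u v : S) : S :=
  if G.E u v then v else (G.succ u).choose

lemma edge_legalMove (G : Game S) (u v : S) : G.E u (legalMove G u v) := by
  unfold legalMove
  split_ifs with h
  · exact h
  · exact (G.succ u).choose_spec

lemma legalMove_of_edge {u v : S} (h : G.E u v) : legalMove G u v = v := if_pos h

def projSt (d : S) : (S × Fin (U + 1)) ⊕ Unit → S :=
  Sum.elim Prod.fst fun _ => d

-- `σ` need only answer legally on paths of `G`, and a history through `sink` does not project to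
-- one; `legalMove` makes `upStrat` a strategy regardless.
def upStrat (G : Game S) (U : ℕ) (d : S) (σ : List S → S)
    (ρ' : List ((S × Fin (U + 1)) ⊕ Unit)) : (S × Fin (U + 1)) ⊕ Unit :=
  let x := ρ'.getLastD (Sum.inr ())
  expStep G U x (legalMove G (projSt d x) (σ (ρ'.map (projSt d))))

lemma upStrat_isStrat1 (d : S) (σ : List S → S) : IsStrat1 (expGame G U) (upStrat G U d σ) := by
  intro ρ' hne _ _
  rw [upStrat, List.getLastD_eq_getLast _ hne]
  exact expE_expStep (fun s c h => by rw [h]; rfl) (edge_legalMove G _ _)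

lemma upStrat_hist_liftPlay {d : S} {σ : List S → S} {π : ℕ → S} {n : ℕ}
    (hE : G.E (π n) (σ (hist π n))) :
    upStrat G U d σ (hist (liftPlay G U π) n) = expStep G U (liftPlay G U π n) (σ (hist π n)) := by
  rw [upStrat, hist_getLastD]
  rcases hn : liftPlay G U π n with ⟨s, c⟩ | ⟨⟨⟩⟩
  · have hproj : ∀ k ≤ n, projSt d (liftPlay G U π k) = π k := fun k hk => by
      rcases hk' : liftPlay G U π k with ⟨s', c'⟩ | ⟨⟨⟩⟩
      · exact (liftPlay_eq_inl hk').1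
      · exact absurd (liftPlay_eq_inr_of_le hk' hk) (by simp [hn])
    rw [← hn, map_hist, hist_congr (π := projSt d ∘ liftPlay G U π) hproj, hproj n le_rfl,
      legalMove_of_edge hE]
  · rfl

lemma exists_move_realizing {d : S} {σ : List S → S} (hσ : IsStrat1 G σ)
    {π' : ℕ → (S × Fin (U + 1)) ⊕ Unit} (hπ' : ∀ k, (expGame G U).E (π' k) (π' (k + 1)))
    (hc : Consistent1 (expGame G U) (upStrat G U d σ) π') {π : ℕ → S} {n : ℕ}
    (hedges : ∀ k < n, G.E (π k) (π (k + 1))) (hagree : ∀ k ≤ n, liftPlay G U π k = π' k) :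
    ∃ v, G.E (π n) v ∧ (G.p1 (π n) → v = σ (hist π n)) ∧ expStep G U (π' n) v = π' (n + 1) := by
  have hover : ∀ s c, π' n = Sum.inl (s, c) → s = π n := hagree n le_rfl ▸ liftPlay_lies_over π n
  by_cases hp : G.p1 (π n)
  · have hE := hσ.edge_hist hedges hp
    refine ⟨_, hE, fun _ => rfl, ?_⟩
    rw [hc n ((expP1_iff hover).2 (Or.inl hp)), hist_congr fun k hk => (hagree k hk).symm,
      upStrat_hist_liftPlay hE, hagree n le_rfl]
  · obtain ⟨v, hv, hstep⟩ := exists_expStep_eq hover (hπ' n)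
    exact ⟨v, hv, fun h => absurd h hp, hstep⟩

lemma exists_liftPlay_eq {s₀ d : S} {σ : List S → S} (hσ : IsStrat1 G σ)
    {π' : ℕ → (S × Fin (U + 1)) ⊕ Unit}
    (hπ' : IsPlay (expGame G U) (Sum.inl (s₀, ⟨0, Nat.succ_pos U⟩)) π')
    (hc : Consistent1 (expGame G U) (upStrat G U d σ) π') :
    ∃ π, IsPlay G s₀ π ∧ Consistent1 G σ π ∧ liftPlay G U π = π' := by
  have : Nonempty S := ⟨s₀⟩
  let Realizes (ρ : List S) (v : S) : Prop :=
    G.E (ρ.getLastD s₀) v ∧ (G.p1 (ρ.getLastD s₀) → v = σ ρ) ∧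
      expStep G U (π' (ρ.length - 1)) v = π' ρ.length
  set π := playOf s₀ fun ρ => Classical.epsilon (Realizes ρ)
  have hrealizes : ∀ n v, Realizes (hist π n) v ↔ G.E (π n) v ∧
      (G.p1 (π n) → v = σ (hist π n)) ∧ expStep G U (π' n) v = π' (n + 1) := fun n v => by
    simp only [Realizes, hist_getLastD, hist_length, Nat.add_sub_cancel]
  have hπ₀ : π' 0 = Sum.inl (π 0, ⟨0, Nat.succ_pos U⟩) := by
    rw [hπ'.1, show π 0 = s₀ from playOf_zero _ _]
  have hstep : ∀ n, Realizes (hist π n) (π (n + 1)) := by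
    intro n
    induction n using Nat.strong_induction_on with
    | _ n ih =>
      have hih := fun k hk => (hrealizes k _).1 (ih k hk)
      obtain ⟨v, hv⟩ := exists_move_realizing hσ hπ'.2 hc (fun k hk => (hih k hk).1)
        (liftPlay_eq_of_expStep hπ₀ fun k hk => (hih k hk).2.2)
      rw [show π (n + 1) = Classical.epsilon (Realizes (hist π n)) from playOf_succ _ _ n]
      exact Classical.epsilon_spec ⟨v, (hrealizes n v).2 hv⟩
  simp only [hrealizes] at hstep
  exact ⟨π, ⟨playOf_zero _ _, fun n => (hstep n).1⟩, fun n => (hstep n).2.1,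
    funext fun n => liftPlay_eq_of_expStep hπ₀ (fun k _ => (hstep k).2.2) n le_rfl⟩

end Forward

section Backward

variable {G : Game S} {U : ℕ}

def liftList (G : Game S) (U : ℕ) : List S → List ((S × Fin (U + 1)) ⊕ Unit)
  | [] => []
  | s :: ρ => List.scanl (expStep G U) (Sum.inl (s, ⟨0, Nat.succ_pos U⟩)) ρ

lemma liftList_hist (π : ℕ → S) (n : ℕ) :
    liftList G U (hist π n) = hist (liftPlay G U π) n := by
  rw [hist, List.ofFn_succ, liftList]
  refine List.ext_getElem (by simp [hist_length]) fun i h₁ h₂ => ?_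
  induction i with
  | zero => simp [hist, liftPlay]
  | succ i ih =>
    rw [List.getElem_succ_scanl,
      ih (by simp at h₁ ⊢; omega) (by simp [hist_length] at h₂ ⊢; omega)]
    simp only [hist, List.getElem_ofFn, Fin.val_succ]
    rfl

open Classical in
def downStrat (G : Game S) (U : ℕ) (d : S)
    (σ' : List ((S × Fin (U + 1)) ⊕ Unit) → (S × Fin (U + 1)) ⊕ Unit) (ρ : List S) : S :=
  let u := ρ.getLastD d
  let x := (liftList G U ρ).getLastD (Sum.inr ())
  if h : ∃ v, G.E u v ∧ expStep G U x v = σ' (liftList G U ρ) then h.choose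
  else (G.succ u).choose

variable {d : S} {σ' : List ((S × Fin (U + 1)) ⊕ Unit) → (S × Fin (U + 1)) ⊕ Unit}

lemma downStrat_isStrat1 : IsStrat1 G (downStrat G U d σ') := by
  intro ρ hne _ _
  rw [← List.getLastD_eq_getLast d hne]
  dsimp only [downStrat]
  split_ifs with h
  · exact h.choose_spec.1
  · exact (G.succ _).choose_spec

lemma expStep_downStrat {ρ : List S}
    (h : ∃ v, G.E (ρ.getLastD d) v ∧
      expStep G U ((liftList G U ρ).getLastD (Sum.inr ())) v = σ' (liftList G U ρ)) :
    expStep G U ((liftList G U ρ).getLastD (Sum.inr ())) (downStrat G U d σ' ρ) =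
      σ' (liftList G U ρ) := by
  unfold downStrat
  rw [dif_pos h]
  exact h.choose_spec.2

lemma liftPlay_consistent {s₀ : S} (hσ' : IsStrat1 (expGame G U) σ') {π : ℕ → S}
    (hπ : IsPlay G s₀ π) (hc : Consistent1 G (downStrat G U d σ') π) :
    Consistent1 (expGame G U) σ' (liftPlay G U π) := by
  intro n hp'
  have hy := hσ'.edge_hist (fun k _ => (liftPlay_isPlay hπ).2 k) hp'
  by_cases hp : G.p1 (π n)
  · have hex := exists_expStep_eq (liftPlay_lies_over π n) hy
    rw [← hist_getLastD π n d, ← hist_getLastD (liftPlay G U π) n (Sum.inr ()),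
      ← liftList_hist] at hex
    rw [liftPlay, hc n hp]
    simpa only [liftList_hist, hist_getLastD] using expStep_downStrat hex
  · have hn := ((expP1_iff (liftPlay_lies_over π n)).1 hp').resolve_left hp
    rw [liftPlay, hn, expStep_inr]
    exact (eq_inr_of_expE_inr (hn ▸ hy)).symm

end Backward

theorem AELU_reduces_to_AE_general {S : Type} (G : Game S) (s₀ : S) (U : ℕ) (t : ℚ) :
    (∃ σ : List S → S,
        Winning1 G s₀ σ (fun π => LUObj G U 0 π ∧ AvgEnergyLevel G t π)) ↔
    (∃ σ, Winning1 (expGame G U) (Sum.inl (s₀, (⟨0, Nat.succ_pos U⟩ : Fin (U + 1)))) σ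
        (AvgEnergyLevel (expGame G U) t)) := by
  constructor
  · rintro ⟨σ, hσ, hwin⟩
    refine ⟨upStrat G U s₀ σ, upStrat_isStrat1 s₀ σ, fun π' hπ' hc => ?_⟩
    obtain ⟨π, hπ, hcπ, rfl⟩ := exists_liftPlay_eq hσ hπ' hc
    obtain ⟨hLU, hAE⟩ := hwin π hπ hcπ
    rwa [AvgEnergyLevel, AEsupP_liftPlay (liftPlay_ne_inr_iff.2 hLU)]
  · rintro ⟨σ', hσ', hwin⟩
    refine ⟨downStrat G U s₀ σ', downStrat_isStrat1, fun π hπ hc => ?_⟩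
    have hAE := hwin _ (liftPlay_isPlay hπ) (liftPlay_consistent hσ' hπ hc)
    have hne : ∀ n, liftPlay G U π n ≠ Sum.inr () := fun n hn => by
      rw [AvgEnergyLevel, AEsupP_eq_top_of_inr (liftPlay_isPlay hπ) hn] at hAE
      exact absurd hAE (not_le.2 (EReal.coe_lt_top _))
    exact ⟨liftPlay_ne_inr_iff.1 hne, by rwa [AvgEnergyLevel, ← AEsupP_liftPlay hne]⟩

/-- Reduction of the average-energy problem under lower- and upper-bounded energy to a plain
average-energy problem on the expanded game: player 1 wins `LU(U, 0) ∩ AvgEnergyLevel t`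
from `s₀` in `G` iff he wins `AvgEnergyLevel t` from `(s₀, 0)` in the expanded game. -/
theorem AELU_reduces_to_AE {S : Type} [Fintype S] (G : Game S) (s₀ : S) (U : ℕ) (t : ℚ) :
    (∃ σ : List S → S,
        Winning1 G s₀ σ (fun π => LUObj G U 0 π ∧ AvgEnergyLevel G t π)) ↔
    (∃ σ, Winning1 (expGame G U) (Sum.inl (s₀, (⟨0, Nat.succ_pos U⟩ : Fin (U + 1)))) σ
        (AvgEnergyLevel (expGame G U) t)) :=
  AELU_reduces_to_AE_general G s₀ U t

end
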